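/- arXiv:1701.01972 — 6 statements merged into one kernel-verified Lean document; each statement's English description precedes it below -/
import Mathlib

section
/- Let C be a real constant. Then the function g(u) = ∫₀ᵘ (1 + τ² e^{τ² + C})^{-1/2} dτ satisfies (1 − g'(u)²)·g'(u) + u·g''(u) + u²·g'(u)·(1 − g'(u)²) = 0 for all u ∈ ℝ. -/
theorem stmt5 (C : ℝ)
    (g : ℝ → ℝ)
    (hg : g = fun u : ℝ =>
      ∫ τ in (0 : ℝ)..u, Real.sqrt (1 / (1 + τ ^ 2 * Real.exp (τ ^ 2 + C)))) :
    ∀ u : ℝ,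
      (1 - (deriv g u) ^ 2) * deriv g u + u * deriv (deriv g) u +
        u ^ 2 * deriv g u * (1 - (deriv g u) ^ 2) = 0 := by
  intro u
  set f : ℝ → ℝ := fun τ => Real.sqrt (1 / (1 + τ ^ 2 * Real.exp (τ ^ 2 + C))) with hf
  have hFpos : ∀ x : ℝ, 0 < 1 + x ^ 2 * Real.exp (x ^ 2 + C) := by
    intro x
    positivity
  have hcont : Continuous f := by
    apply Real.continuous_sqrt.comp
    apply Continuous.div continuous_const
    · fun_prop
    · intro x; exact (hFpos x).ne'
  have hderiv : deriv g = f := by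
    funext x
    rw [hg]
    exact Continuous.deriv_integral f hcont 0 x
  rw [hderiv]
  -- derivative of F x = 1 + x^2 * exp(x^2+C)
  set F : ℝ → ℝ := fun x => 1 + x ^ 2 * Real.exp (x ^ 2 + C) with hFdef
  have hFne : F u ≠ 0 := (hFpos u).ne'
  have hF' : HasDerivAt F (2 * u * Real.exp (u ^ 2 + C) + u ^ 2 * (Real.exp (u ^ 2 + C) * (2 * u))) u := by
    have h1 : HasDerivAt (fun x : ℝ => x ^ 2) (2 * u) u := by
      simpa using hasDerivAt_pow 2 u
    have h2 : HasDerivAt (fun x : ℝ => x ^ 2 + C) (2 * u) u := by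
      simpa using h1.add_const C
    have h3 : HasDerivAt (fun x : ℝ => Real.exp (x ^ 2 + C)) (Real.exp (u ^ 2 + C) * (2 * u)) u :=
      (Real.hasDerivAt_exp _).comp u h2
    have h4 := h1.mul h3
    simpa [hFdef, mul_comm, mul_left_comm, mul_assoc] using (h4.const_add 1)
  set F' : ℝ := 2 * u * Real.exp (u ^ 2 + C) + u ^ 2 * (Real.exp (u ^ 2 + C) * (2 * u)) with hF'def
  have hinv : HasDerivAt (fun x => 1 / F x) (-F' / F u ^ 2) u := by
    simpa [one_div] using hF'.fun_inv hFne
  have hinvne : 1 / F u ≠ 0 := by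
    simp [hFne]
  have hs : HasDerivAt f ((-F' / F u ^ 2) / (2 * Real.sqrt (1 / F u))) u := by
    simpa [hf] using hinv.sqrt hinvne
  have hderiv2 : deriv f u = (-F' / F u ^ 2) / (2 * Real.sqrt (1 / F u)) := hs.deriv
  rw [hderiv2]
  have hspos : 0 < Real.sqrt (1 / F u) := Real.sqrt_pos.mpr (by positivity)
  have hsq : Real.sqrt (1 / F u) ^ 2 = 1 / F u := Real.sq_sqrt (by positivity)
  have hfu : f u = Real.sqrt (1 / F u) := rfl
  rw [hfu]
  set s : ℝ := Real.sqrt (1 / F u) with hsdef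
  have hFu : F u = 1 + u ^ 2 * Real.exp (u ^ 2 + C) := rfl
  -- now pure algebra
  field_simp [hspos.ne'] at hsq ⊢
  rw [hFu] at hsq ⊢
  rw [hF'def]
  linear_combination (2 * (1 + u ^ 2) *
      ((1 + u ^ 2 * Real.exp (u ^ 2 + C)) - 1 - s ^ 2 * (1 + u ^ 2 * Real.exp (u ^ 2 + C)))) * hsq
end

section
/- Let 0 < C < e and define g(u) = ∫₀ᵘ √(e^{τ²}/(e^{τ²} − C τ²)) dτ for u ∈ ℝ. Then g is well-defined and smooth on ℝ, g'(u)² ≥ 1 for all u, and g'(u)² > 1 for all u ≠ 0; hence the curve γ(u) = (u, 0, g(u)) is timelike for all u ≠ 0. -/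
open scoped ContDiff

theorem stmt6 (C : ℝ) (hC0 : 0 < C) (hCe : C < Real.exp 1)
    (g : ℝ → ℝ)
    (hg : g = fun u : ℝ =>
      ∫ τ in (0 : ℝ)..u, Real.sqrt (Real.exp (τ ^ 2) / (Real.exp (τ ^ 2) - C * τ ^ 2))) :
    ContDiff ℝ (⊤ : ℕ∞) g ∧
    (∀ u : ℝ, 1 ≤ (deriv g u) ^ 2) ∧
    (∀ u : ℝ, u ≠ 0 → 1 < (deriv g u) ^ 2) ∧
    (∀ u : ℝ, u ≠ 0 → 1 - (deriv g u) ^ 2 < 0) := by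
  set f : ℝ → ℝ := fun τ => Real.sqrt (Real.exp (τ ^ 2) / (Real.exp (τ ^ 2) - C * τ ^ 2))
    with hf
  have hden : ∀ τ : ℝ, 0 < Real.exp (τ ^ 2) - C * τ ^ 2 := by
    intro τ
    have h1 : Real.exp 1 * τ ^ 2 ≤ Real.exp (τ ^ 2) := by
      have := Real.add_one_le_exp (τ ^ 2 - 1)
      have h2 : Real.exp 1 * (τ ^ 2 - 1 + 1) ≤ Real.exp 1 * Real.exp (τ ^ 2 - 1) :=
        mul_le_mul_of_nonneg_left this (Real.exp_pos 1).le
      rw [← Real.exp_add] at h2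
      simpa using h2
    rcases eq_or_ne τ 0 with h | h
    · simp [h]
    · have hτ2 : 0 < τ ^ 2 := by positivity
      have : C * τ ^ 2 < Real.exp 1 * τ ^ 2 :=
        mul_lt_mul_of_pos_right hCe hτ2
      linarith
  have hratio1 : ∀ τ : ℝ, (1 : ℝ) ≤ Real.exp (τ ^ 2) / (Real.exp (τ ^ 2) - C * τ ^ 2) := by
    intro τ
    rw [le_div_iff₀ (hden τ)]
    nlinarith [sq_nonneg τ, hC0]
  have hf1 : ∀ τ : ℝ, (1 : ℝ) ≤ f τ := by
    intro τ
    have := hratio1 τ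
    rw [hf]
    simpa using Real.one_le_sqrt.mpr this
  have hfgt : ∀ τ : ℝ, τ ≠ 0 → (1 : ℝ) < f τ := by
    intro τ hτ
    have hτ2 : 0 < τ ^ 2 := by positivity
    have hr : (1 : ℝ) < Real.exp (τ ^ 2) / (Real.exp (τ ^ 2) - C * τ ^ 2) := by
      rw [lt_div_iff₀ (hden τ)]
      nlinarith [mul_pos hC0 hτ2]
    rw [hf]
    have := Real.lt_sqrt (x := 1) (y := Real.exp (τ ^ 2) / (Real.exp (τ ^ 2) - C * τ ^ 2))
      zero_le_one
    simpa using this.mpr (by simpa using hr)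
  have hfsmooth : ContDiff ℝ (⊤ : ℕ∞) f := by
    have hinner : ContDiff ℝ (⊤ : ℕ∞) fun τ : ℝ =>
        Real.exp (τ ^ 2) / (Real.exp (τ ^ 2) - C * τ ^ 2) := by
      apply ContDiff.div
      · exact Real.contDiff_exp.comp (contDiff_id.pow 2)
      · exact (Real.contDiff_exp.comp (contDiff_id.pow 2)).sub
          (contDiff_const.mul (contDiff_id.pow 2))
      · exact fun τ => (hden τ).ne'
    exact ContDiff.sqrt hinner (fun τ => by
      have := hratio1 τ; intro h; rw [h] at this; linarith)
  have hfc : Continuous f := hfsmooth.continuous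
  have hderiv : ∀ u : ℝ, deriv g u = f u := by
    intro u
    rw [hg]
    exact hfc.deriv_integral f 0 u
  have hgsmooth : ContDiff ℝ (⊤ : ℕ∞) g := by
    refine contDiff_infty_iff_deriv.mpr ⟨fun u => differentiableAt_of_deriv_ne_zero
      (by rw [hderiv u]; linarith [hf1 u]), ?_⟩
    rw [show deriv g = f from funext hderiv]
    exact hfsmooth
  refine ⟨hgsmooth, ?_, ?_, ?_⟩
  · intro u
    rw [hderiv u]
    nlinarith [hf1 u]
  · intro u hu
    rw [hderiv u]
    nlinarith [hfgt u hu]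
  · intro u hu
    rw [hderiv u]
    nlinarith [hfgt u hu]
end

section
/- Let C > 0 and suppose e^{u²} − C u² > 0 on an open interval D. Then g(u) = ∫_{u₀}^u √(e^{τ²}/(e^{τ²} − C τ²)) dτ (with u₀ ∈ D) satisfies the ODE u·g''(u) + g'(u)(1 − g'(u)²) + u²·g'(u)(g'(u)² − 1) = 0 for all u ∈ D. -/
/-! By the fundamental theorem of calculus `g' = √ρ` on the interval, where
`ρ(u) = e^{u²} / (e^{u²} - C u²)`. A direct computation gives `u ρ' = 2 (1 - u²) ρ (ρ - 1)`,
which for `p = √ρ` reads `u p' = (1 - u²) p (p² - 1)`: the ODE, since `g'' = p'`. -/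

open Set Filter Topology

theorem hasDerivAt_intervalIntegral_of_continuousOn {f : ℝ → ℝ} {s : Set ℝ} (hs : IsOpen s)
    [s.OrdConnected] (hf : ContinuousOn f s) {u₀ v : ℝ} (hu₀ : u₀ ∈ s) (hv : v ∈ s) :
    HasDerivAt (fun u => ∫ τ in u₀..u, f τ) (f v) v :=
  intervalIntegral.integral_hasDerivAt_right
    ((hf.mono (OrdConnected.uIcc_subset ‹_› hu₀ hv)).intervalIntegrable)
    (hf.stronglyMeasurableAtFilter hs v hv) (hf.continuousAt (hs.mem_nhds hv))

theorem deriv_intervalIntegral_eventuallyEq {f : ℝ → ℝ} {s : Set ℝ} (hs : IsOpen s)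
    [s.OrdConnected] (hf : ContinuousOn f s) {u₀ v : ℝ} (hu₀ : u₀ ∈ s) (hv : v ∈ s) :
    deriv (fun u => ∫ τ in u₀..u, f τ) =ᶠ[𝓝 v] f := by
  filter_upwards [hs.mem_nhds hv] with w hw
  exact (hasDerivAt_intervalIntegral_of_continuousOn hs hf hu₀ hw).deriv

theorem sqrt_solves_of_hasDerivAt {ρ : ℝ → ℝ} {ρ' u : ℝ} (hρ : HasDerivAt ρ ρ' u)
    (hpos : 0 < ρ u) (hode : u * ρ' = 2 * (1 - u ^ 2) * ρ u * (ρ u - 1)) :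
    u * deriv (fun τ => √(ρ τ)) u + √(ρ u) * (1 - √(ρ u) ^ 2) +
      u ^ 2 * √(ρ u) * (√(ρ u) ^ 2 - 1) = 0 := by
  rw [(hρ.sqrt hpos.ne').deriv]
  have hp : 0 < √(ρ u) := Real.sqrt_pos.mpr hpos
  rw [← Real.sq_sqrt hpos.le] at hode
  generalize √(ρ u) = p at hp hode ⊢
  field_simp
  linear_combination hode

noncomputable def speedSq (C τ : ℝ) : ℝ := Real.exp (τ ^ 2) / (Real.exp (τ ^ 2) - C * τ ^ 2)

theorem hasDerivAt_speedSq {C u : ℝ} (hu : Real.exp (u ^ 2) - C * u ^ 2 ≠ 0) :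
    HasDerivAt (speedSq C)
      (2 * u * C * (1 - u ^ 2) * speedSq C u / (Real.exp (u ^ 2) - C * u ^ 2)) u := by
  have hsq : HasDerivAt (fun τ : ℝ => τ ^ 2) (2 * u) u := by simpa using hasDerivAt_pow 2 u
  refine (hsq.exp.div (hsq.exp.sub (hsq.const_mul C)) hu).congr_deriv ?_
  rw [speedSq, Pi.sub_apply]
  field_simp
  ring

theorem mul_deriv_speedSq {C u : ℝ} (hu : Real.exp (u ^ 2) - C * u ^ 2 ≠ 0) :
    u * (2 * u * C * (1 - u ^ 2) * speedSq C u / (Real.exp (u ^ 2) - C * u ^ 2)) =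
      2 * (1 - u ^ 2) * speedSq C u * (speedSq C u - 1) := by
  rw [speedSq, div_sub_one hu]
  field_simp
  ring

theorem stmt7_general (C : ℝ) (a b u₀ : ℝ) (hu₀ : u₀ ∈ Set.Ioo a b)
    (hpos : ∀ u ∈ Set.Ioo a b, Real.exp (u ^ 2) - C * u ^ 2 > 0)
    (g : ℝ → ℝ)
    (hg : g = fun u : ℝ =>
      ∫ τ in u₀..u, Real.sqrt (Real.exp (τ ^ 2) / (Real.exp (τ ^ 2) - C * τ ^ 2))) :
    ∀ u ∈ Set.Ioo a b,
      u * deriv (deriv g) u + deriv g u * (1 - (deriv g u) ^ 2) +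
        u ^ 2 * deriv g u * ((deriv g u) ^ 2 - 1) = 0 := by
  intro u hu
  have hcont : ContinuousOn (fun τ => √(speedSq C τ)) (Ioo a b) :=
    Real.continuous_sqrt.comp_continuousOn <|
      ContinuousOn.div (by fun_prop) (by fun_prop) fun τ hτ => (hpos τ hτ).ne'
  have hg' : deriv g =ᶠ[𝓝 u] fun τ => √(speedSq C τ) :=
    hg ▸ deriv_intervalIntegral_eventuallyEq isOpen_Ioo hcont hu₀ hu
  rw [hg'.deriv_eq, hg'.eq_of_nhds]
  exact sqrt_solves_of_hasDerivAt (hasDerivAt_speedSq (hpos u hu).ne')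
    (div_pos (Real.exp_pos _) (hpos u hu)) (mul_deriv_speedSq (hpos u hu).ne')

theorem stmt7 (C : ℝ) (hC : 0 < C) (a b u₀ : ℝ) (hu₀ : u₀ ∈ Set.Ioo a b)
    (hpos : ∀ u ∈ Set.Ioo a b, Real.exp (u ^ 2) - C * u ^ 2 > 0)
    (g : ℝ → ℝ)
    (hg : g = fun u : ℝ =>
      ∫ τ in u₀..u, Real.sqrt (Real.exp (τ ^ 2) / (Real.exp (τ ^ 2) - C * τ ^ 2))) :
    ∀ u ∈ Set.Ioo a b,
      u * deriv (deriv g) u + deriv g u * (1 - (deriv g u) ^ 2) +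
        u ^ 2 * deriv g u * ((deriv g u) ^ 2 - 1) = 0 :=
  stmt7_general C a b u₀ hu₀ hpos g hg
end

section
/- The improper integral ∫₀¹ √(e^{τ²}/(e^{τ²} − e·τ²)) dτ diverges (equals +∞). -/
/-! Writing `e^x = e · e^{x-1}` and using `|e^u - 1 - u| ≤ u²` for `|u| ≤ 1`, the denominator
satisfies `0 < e^{τ²} - e τ² ≤ e (τ² - 1)² ≤ 4e (1 - τ)²` on `[0, 1)`. As `e^{τ²} ≥ 1`, the
integrand is at least `1 / (2√e (1 - τ))`, which is not integrable at `1`. -/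

open Real MeasureTheory Set

lemma exp_one_mul_lt_exp {x : ℝ} (hx : x ≠ 1) : exp 1 * x < exp x := by
  have h := add_one_lt_exp (sub_ne_zero.mpr hx)
  have hsplit : exp x = exp 1 * exp (x - 1) := by rw [← exp_add]; ring_nf
  rw [hsplit]
  exact mul_lt_mul_of_pos_left (by linarith) (exp_pos 1)

lemma exp_sub_exp_one_mul_le_sq {x : ℝ} (hx : |x - 1| ≤ 1) :
    exp x - exp 1 * x ≤ exp 1 * (x - 1) ^ 2 := by
  have h := (abs_le.mp (abs_exp_sub_one_sub_id_le hx)).2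
  have hsplit : exp x = exp 1 * exp (x - 1) := by rw [← exp_add]; ring_nf
  rw [hsplit]
  nlinarith [exp_pos 1]

lemma lintegral_ofReal_inv_sub_eq_top {a b : ℝ} (hab : a < b) :
    ∫⁻ x in Ioo a b, ENNReal.ofReal ((b - x)⁻¹) = ⊤ := by
  by_contra h
  have hpos : ∀ᵐ x ∂volume.restrict (Ioo a b), 0 ≤ (b - x)⁻¹ := by
    filter_upwards [ae_restrict_mem measurableSet_Ioo] with x hx
    exact inv_nonneg.mpr (sub_nonneg.mpr hx.2.le)
  have hint : IntegrableOn (fun x ↦ (b - x)⁻¹) (Ioo a b) :=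
    (lintegral_ofReal_ne_top_iff_integrable (by fun_prop) hpos).mp h
  have : IntervalIntegrable (fun x ↦ (x - b)⁻¹) volume a b := by
    rw [intervalIntegrable_iff_integrableOn_Ioc_of_le hab.le,
      integrableOn_Ioc_iff_integrableOn_Ioo]
    refine hint.neg.congr_fun (fun x _ ↦ ?_) measurableSet_Ioo
    simp only [Pi.neg_apply, ← inv_neg, neg_sub]
  simp [hab.ne, hab.le] at this

lemma inv_one_sub_le_mul_sqrt_exp_sq_div {τ : ℝ} (h0 : 0 ≤ τ) (h1 : τ < 1) :
    (1 - τ)⁻¹ ≤ 2 * √(exp 1) * √(exp (τ ^ 2) / (exp (τ ^ 2) - exp 1 * τ ^ 2)) := by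
  have hden : 0 < exp (τ ^ 2) - exp 1 * τ ^ 2 :=
    sub_pos.mpr (exp_one_mul_lt_exp (by nlinarith))
  have hquad : exp (τ ^ 2) - exp 1 * τ ^ 2 ≤ 4 * exp 1 * (1 - τ) ^ 2 := by
    have h := exp_sub_exp_one_mul_le_sq (x := τ ^ 2) (by rw [abs_le]; constructor <;> nlinarith)
    have : (τ ^ 2 - 1) ^ 2 ≤ 4 * (1 - τ) ^ 2 := by
      nlinarith [mul_le_mul_of_nonneg_left (show (1 + τ) ^ 2 ≤ 4 by nlinarith) (sq_nonneg (1 - τ))]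
    nlinarith [exp_pos 1]
  have hsq : ((1 - τ)⁻¹) ^ 2 ≤ 4 * exp 1 * (exp (τ ^ 2) / (exp (τ ^ 2) - exp 1 * τ ^ 2)) := by
    rw [inv_pow, inv_le_iff_one_le_mul₀ (by nlinarith), mul_div_assoc', div_mul_eq_mul_div,
      le_div_iff₀ hden]
    nlinarith [one_le_exp (sq_nonneg τ)]
  refine le_of_pow_le_pow_left₀ two_ne_zero (by positivity) ?_
  rw [mul_pow, mul_pow, sq_sqrt (exp_pos 1).le, sq_sqrt (by positivity)]
  linarith

theorem stmt8 :
    ∫⁻ τ in Set.Ioo (0 : ℝ) 1,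
      ENNReal.ofReal
        (Real.sqrt (Real.exp (τ ^ 2) / (Real.exp (τ ^ 2) - Real.exp 1 * τ ^ 2))) = ⊤ := by
  have hC : 0 ≤ 2 * √(exp 1) := by positivity
  have hcompare : ∫⁻ τ in Ioo (0 : ℝ) 1, ENNReal.ofReal ((1 - τ)⁻¹) ≤
      ∫⁻ τ in Ioo (0 : ℝ) 1, ENNReal.ofReal (2 * √(exp 1)) *
        ENNReal.ofReal (√(exp (τ ^ 2) / (exp (τ ^ 2) - exp 1 * τ ^ 2))) := by
    refine setLIntegral_mono (by fun_prop) fun τ hτ ↦ ?_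
    rw [← ENNReal.ofReal_mul hC]
    exact ENNReal.ofReal_le_ofReal (inv_one_sub_le_mul_sqrt_exp_sq_div hτ.1.le hτ.2)
  rw [lintegral_ofReal_inv_sub_eq_top zero_lt_one, lintegral_const_mul' _ _ ENNReal.ofReal_ne_top,
    top_le_iff, ENNReal.mul_eq_top] at hcompare
  exact (hcompare.resolve_right fun h ↦ ENNReal.ofReal_ne_top h.1).2
end

section
/- If the smooth function g : I → ℝ satisfies g'(u)² < 1 and solves (1 − g'²)g' + u g'' + u² g'(1 − g'²) = 0 on an interval I with g' nonvanishing on I, then there exists a constant C ∈ ℝ such that g'(u)² = 1/(1 + u² e^{u² + C}) for all u ∈ I with u ≠ 0. -/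
/-!
Squaring turns the equation into the Bernoulli-type equation
`h' = -2 ((u² + 1) / u) h (1 - h)` for `h = g'²`, which separates: along a solution with
`0 < h < 1` the quantity `log ((1 - h) / h) - log u² - u²` has zero derivative, hence is
constant on the interval. The interval cannot contain `0`, since there the equation would
force `(1 - g'²) g' = 0`.
-/

open Real

noncomputable def firstIntegral (h : ℝ → ℝ) (u : ℝ) : ℝ :=
  log (1 - h u) - log (h u) - log (u ^ 2) - u ^ 2

lemma ne_zero_of_ode {p q u : ℝ} (hp : p ≠ 0) (hp1 : p ^ 2 < 1)
    (hode : (1 - p ^ 2) * p + u * q + u ^ 2 * p * (1 - p ^ 2) = 0) : u ≠ 0 := by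
  rintro rfl
  have : (1 - p ^ 2) * p = 0 := by simpa using hode
  rcases mul_eq_zero.1 this with h | h
  · linarith
  · exact hp h

lemma hasDerivAt_sq_of_ode {p : ℝ → ℝ} {q u : ℝ} (hpq : HasDerivAt p q u) (hu : u ≠ 0)
    (hode : (1 - p u ^ 2) * p u + u * q + u ^ 2 * p u * (1 - p u ^ 2) = 0) :
    HasDerivAt (fun x ↦ p x ^ 2) (-2 * ((u ^ 2 + 1) / u) * (p u ^ 2 * (1 - p u ^ 2))) u := by
  refine (hpq.pow 2).congr_deriv ?_
  field_simp
  linear_combination (2 * p u) * hode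

lemma hasDerivAt_firstIntegral {h : ℝ → ℝ} {u : ℝ} (hu : u ≠ 0) (h0 : h u ≠ 0) (h1 : h u ≠ 1)
    (hh : HasDerivAt h (-2 * ((u ^ 2 + 1) / u) * (h u * (1 - h u))) u) :
    HasDerivAt (firstIntegral h) 0 u := by
  have hsq : HasDerivAt (fun x : ℝ ↦ x ^ 2) (2 * u) u := by
    simpa using hasDerivAt_pow 2 u
  have h1' : 1 - h u ≠ 0 := sub_ne_zero.2 (Ne.symm h1)
  refine ((((hasDerivAt_const u 1).sub hh).log h1').sub (hh.log h0)).sub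
    (hsq.log (pow_ne_zero 2 hu)) |>.sub hsq |>.congr_deriv ?_
  simp only [Pi.sub_apply]
  field_simp
  ring

lemma eq_of_firstIntegral_eq {h : ℝ → ℝ} {u C : ℝ} (hu : u ≠ 0) (h0 : 0 < h u) (h1 : h u < 1)
    (hC : firstIntegral h u = C) : h u = 1 / (1 + u ^ 2 * exp (u ^ 2 + C)) := by
  have hu2 : 0 < u ^ 2 := by positivity
  have hexp : exp (u ^ 2 + C) = (1 - h u) / (h u * u ^ 2) := by
    rw [← hC, firstIntegral, ← exp_log (show 0 < (1 - h u) / (h u * u ^ 2) by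
      apply div_pos <;> [linarith; positivity]),
      log_div (by linarith) (by positivity), log_mul h0.ne' hu2.ne']
    ring_nf
  rw [hexp]
  field_simp
  ring

theorem stmt13_general (a b : ℝ) (g' g'' : ℝ → ℝ)
    (hg'' : ∀ u ∈ Set.Ioo a b, HasDerivAt g' (g'' u) u)
    (hsp : ∀ u ∈ Set.Ioo a b, (g' u) ^ 2 < 1)
    (hne : ∀ u ∈ Set.Ioo a b, g' u ≠ 0)
    (hode : ∀ u ∈ Set.Ioo a b,
      (1 - (g' u) ^ 2) * g' u + u * g'' u + u ^ 2 * g' u * (1 - (g' u) ^ 2) = 0) :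
    ∃ C : ℝ, ∀ u ∈ Set.Ioo a b, u ≠ 0 →
      (g' u) ^ 2 = 1 / (1 + u ^ 2 * Real.exp (u ^ 2 + C)) := by
  set h : ℝ → ℝ := fun x ↦ g' x ^ 2
  have hderiv : ∀ u ∈ Set.Ioo a b, HasDerivAt (firstIntegral h) 0 u := fun u hu ↦ by
    have hu0 := ne_zero_of_ode (hne u hu) (hsp u hu) (hode u hu)
    exact hasDerivAt_firstIntegral hu0 (pow_ne_zero 2 (hne u hu)) (hsp u hu).ne
      (hasDerivAt_sq_of_ode (hg'' u hu) hu0 (hode u hu))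
  obtain ⟨C, hC⟩ := isOpen_Ioo.exists_is_const_of_deriv_eq_zero isPreconnected_Ioo
    (fun u hu ↦ (hderiv u hu).differentiableAt.differentiableWithinAt)
    (fun u hu ↦ (hderiv u hu).deriv)
  exact ⟨C, fun u hu hu0 ↦ eq_of_firstIntegral_eq (h := h) hu0 (sq_pos_of_ne_zero (hne u hu))
    (hsp u hu) (hC u hu)⟩

theorem stmt13 (a b : ℝ) (g g' g'' : ℝ → ℝ)
    (hg' : ∀ u ∈ Set.Ioo a b, HasDerivAt g (g' u) u)
    (hg'' : ∀ u ∈ Set.Ioo a b, HasDerivAt g' (g'' u) u)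
    (hsp : ∀ u ∈ Set.Ioo a b, (g' u) ^ 2 < 1)
    (hne : ∀ u ∈ Set.Ioo a b, g' u ≠ 0)
    (hode : ∀ u ∈ Set.Ioo a b,
      (1 - (g' u) ^ 2) * g' u + u * g'' u + u ^ 2 * g' u * (1 - (g' u) ^ 2) = 0) :
    ∃ C : ℝ, ∀ u ∈ Set.Ioo a b, u ≠ 0 →
      (g' u) ^ 2 = 1 / (1 + u ^ 2 * Real.exp (u ^ 2 + C)) :=
  stmt13_general a b g' g'' hg'' hsp hne hode
end

section
/- If the smooth function g : I → ℝ satisfies g'(u)² > 1 and solves u g''(u) + g'(u)(1 − g'(u)²) + u² g'(u)(g'(u)² − 1) = 0 on an open interval I with 0 ∉ I, then there exists a constant C > 0 such that g'(u)² = e^{u²}/(e^{u²} − C u²) for all u ∈ I. -/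
/-!
Along a solution, `(g'² - 1) / g'² · e^{u²} / u²` is a first integral: its derivative is
`2 e^{u²} / (u³ g'³)` times the left-hand side of the equation. Solving the resulting identity for
`g'²` gives the formula, and the constant is positive because `g'² > 1`.
-/

open Real

noncomputable def fMinimalFirstIntegral (p u : ℝ) : ℝ :=
  (p ^ 2 - 1) / p ^ 2 * (exp (u ^ 2) / u ^ 2)

theorem hasDerivAt_fMinimalFirstIntegral {p : ℝ → ℝ} {p' u : ℝ} (hp : HasDerivAt p p' u)
    (hu : u ≠ 0) (hpu : p u ≠ 0) :
    HasDerivAt (fun x => fMinimalFirstIntegral (p x) x)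
      (2 * exp (u ^ 2) / (u ^ 3 * p u ^ 3) *
        (u * p' + p u * (1 - p u ^ 2) + u ^ 2 * p u * (p u ^ 2 - 1))) u := by
  have hsq := hp.fun_pow 2
  have hu2 := hasDerivAt_pow 2 u
  refine (((hsq.sub_const 1).fun_div hsq (pow_ne_zero 2 hpu)).mul
    ((hu2.exp).fun_div hu2 (pow_ne_zero 2 hu))).congr_deriv ?_
  field_simp
  ring

theorem fMinimalFirstIntegral_pos {p u : ℝ} (hp : 1 < p ^ 2) (hu : u ≠ 0) :
    0 < fMinimalFirstIntegral p u := by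
  unfold fMinimalFirstIntegral
  have : 0 < p ^ 2 - 1 := by linarith
  positivity

theorem sq_eq_of_fMinimalFirstIntegral_eq {p u C : ℝ} (hp : p ≠ 0) (hu : u ≠ 0)
    (hC : fMinimalFirstIntegral p u = C) :
    p ^ 2 = exp (u ^ 2) / (exp (u ^ 2) - C * u ^ 2) := by
  have hden : exp (u ^ 2) - C * u ^ 2 = exp (u ^ 2) / p ^ 2 := by
    rw [← hC, fMinimalFirstIntegral]
    field_simp
    ring
  rw [hden, div_div_cancel₀ (exp_pos _).ne']

theorem stmt14_general (a b : ℝ) (g' g'' : ℝ → ℝ)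
    (h0 : (0 : ℝ) ∉ Set.Ioo a b)
    (hg'' : ∀ u ∈ Set.Ioo a b, HasDerivAt g' (g'' u) u)
    (htl : ∀ u ∈ Set.Ioo a b, (g' u) ^ 2 > 1)
    (hode : ∀ u ∈ Set.Ioo a b,
      u * g'' u + g' u * (1 - (g' u) ^ 2) + u ^ 2 * g' u * ((g' u) ^ 2 - 1) = 0) :
    ∃ C : ℝ, 0 < C ∧ ∀ u ∈ Set.Ioo a b,
      (g' u) ^ 2 = Real.exp (u ^ 2) / (Real.exp (u ^ 2) - C * u ^ 2) := by
  rcases (Set.Ioo a b).eq_empty_or_nonempty with hempty | ⟨u₀, hu₀⟩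
  · exact ⟨1, one_pos, by simp [hempty]⟩
  have hu_ne : ∀ u ∈ Set.Ioo a b, u ≠ 0 := fun u hu h => h0 (h ▸ hu)
  have hg'_ne : ∀ u ∈ Set.Ioo a b, g' u ≠ 0 := fun u hu h => by
    have := htl u hu
    norm_num [h] at this
  have hderiv : ∀ u ∈ Set.Ioo a b,
      HasDerivAt (fun x => fMinimalFirstIntegral (g' x) x) 0 u := fun u hu => by
    simpa [hode u hu] using
      hasDerivAt_fMinimalFirstIntegral (hg'' u hu) (hu_ne u hu) (hg'_ne u hu)
  have hconst : ∀ u ∈ Set.Ioo a b,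
      fMinimalFirstIntegral (g' u) u = fMinimalFirstIntegral (g' u₀) u₀ := fun u hu =>
    isOpen_Ioo.is_const_of_deriv_eq_zero isPreconnected_Ioo
      (fun x hx => (hderiv x hx).differentiableAt.differentiableWithinAt)
      (fun x hx => (hderiv x hx).deriv) hu hu₀
  exact ⟨_, fMinimalFirstIntegral_pos (htl u₀ hu₀) (hu_ne u₀ hu₀), fun u hu =>
    sq_eq_of_fMinimalFirstIntegral_eq (hg'_ne u hu) (hu_ne u hu) (hconst u hu)⟩

theorem stmt14 (a b : ℝ) (g g' g'' : ℝ → ℝ)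
    (h0 : (0 : ℝ) ∉ Set.Ioo a b)
    (hg' : ∀ u ∈ Set.Ioo a b, HasDerivAt g (g' u) u)
    (hg'' : ∀ u ∈ Set.Ioo a b, HasDerivAt g' (g'' u) u)
    (htl : ∀ u ∈ Set.Ioo a b, (g' u) ^ 2 > 1)
    (hode : ∀ u ∈ Set.Ioo a b,
      u * g'' u + g' u * (1 - (g' u) ^ 2) + u ^ 2 * g' u * ((g' u) ^ 2 - 1) = 0) :
    ∃ C : ℝ, 0 < C ∧ ∀ u ∈ Set.Ioo a b,
      (g' u) ^ 2 = Real.exp (u ^ 2) / (Real.exp (u ^ 2) - C * u ^ 2) :=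
  stmt14_general a b g' g'' h0 hg'' htl hode
end
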